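/- Let A be a strongly logmodular proper uniform algebra on a compact Hausdorff space X, i.e., every real-valued continuous function on X equals log|g| for some invertible g ∈ A. If A is pervasive, then A is maximal in C(X). -/

import Mathlib

variable {X : Type} [TopologicalSpace X] [CompactSpace X] [T2Space X]

/-- A uniform algebra `A` on `X` is pervasive if for every nonempty proper closed subset
`F` of `X`, the restrictions of elements of `A` to `F` are dense in `C(F, ℂ)`. -/
def Pervasive (A : Subalgebra ℂ C(X, ℂ)) : Prop :=
  ∀ F : Set X, IsClosed F → F.Nonempty → F ≠ Set.univ →
    Dense ((fun f : C(X, ℂ) => f.restrict F) '' (A : Set C(X, ℂ)))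

/-- `A` is strongly logmodular: every real-valued continuous function on `X` is
`log |g|` for some `g` invertible in `A`. -/
def StronglyLogmodular (A : Subalgebra ℂ C(X, ℂ)) : Prop :=
  ∀ u : C(X, ℝ), ∃ g ∈ A, (∃ h ∈ A, g * h = 1) ∧
    ∀ x : X, Real.log ‖g x‖ = u x

/-!
Let `B ⊇ A` be a closed subalgebra with `B ≠ C(X)` and let `f ∈ B`. After scaling, `v = 1 - f`
is invertible in `B` by the Neumann series. Strong logmodularity gives `g` invertible in `A`
with `|g| = 1 / |v|`, so `u = g v` is unimodular and invertible in `B`, whence `ū = u⁻¹ ∈ B`.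
If `u` were nonconstant, `Re u` or `Im u` would be a nonconstant real function in `B`; composing
it with an Urysohn function yields `e ∈ B` with `e` and `1 - e` vanishing off proper closed sets,
and pervasiveness then puts `e h` and `(1 - e) h` in `B` for every `h`, i.e. `B = C(X)`.
So `u` is constant and `v = g⁻¹ u ∈ A`.
-/

lemma exists_one_sub_mul_eq_one {R S : Type*} [NormedRing R] [HasSummableGeomSeries R]
    [SetLike S R] [SubringClass S R] {s : S} (hs : IsClosed (s : Set R)) {f : R} (hf : f ∈ s)
    (hf1 : ‖f‖ < 1) : ∃ k ∈ s, (1 - f) * k = 1 :=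
  ⟨∑' n, f ^ n, hs.mem_of_tendsto (summable_geometric_of_norm_lt_one hf1).hasSum
    (.of_forall fun _ => sum_mem fun n _ => pow_mem hf n), mul_neg_geom_series f hf1⟩

namespace ContinuousMap

variable {Y : Type*} [TopologicalSpace Y]

noncomputable def ofRealAm : C(Y, ℝ) →ₐ[ℝ] C(Y, ℂ) :=
  Complex.ofRealAm.compLeftContinuous ℝ Complex.continuous_ofReal

@[simp]
lemma ofRealAm_apply (ρ : C(Y, ℝ)) (x : Y) : ofRealAm ρ x = ρ x := rfl

lemma continuous_ofRealAm : Continuous (ofRealAm : C(Y, ℝ) → C(Y, ℂ)) :=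
  continuous_postcomp ⟨_, Complex.continuous_ofReal⟩

lemma ofRealAm_re_mem {B : Subalgebra ℂ C(Y, ℂ)} {u : C(Y, ℂ)} (hu : u ∈ B)
    (hu' : star u ∈ B) : ofRealAm ⟨fun x => (u x).re, by fun_prop⟩ ∈ B := by
  have : ofRealAm ⟨fun x => (u x).re, by fun_prop⟩ = (2 : ℂ)⁻¹ • (u + star u) := by
    ext x
    simp [Complex.re_eq_add_conj, div_eq_inv_mul]
  rw [this]
  exact B.smul_mem (B.add_mem hu hu') _

lemma ofRealAm_im_mem {B : Subalgebra ℂ C(Y, ℂ)} {u : C(Y, ℂ)} (hu : u ∈ B)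
    (hu' : star u ∈ B) : ofRealAm ⟨fun x => (u x).im, by fun_prop⟩ ∈ B := by
  have : ofRealAm ⟨fun x => (u x).im, by fun_prop⟩ = (2 * Complex.I)⁻¹ • (u - star u) := by
    ext x
    simp [Complex.im_eq_sub_conj, div_eq_inv_mul]
  rw [this]
  exact B.smul_mem (B.sub_mem hu hu') _

lemma eq_star_of_mul_eq_one {𝕜 : Type*} [RCLike 𝕜] {u k : C(Y, 𝕜)}
    (hu : ∀ x, ‖u x‖ = 1) (huk : u * k = 1) : k = star u := by
  have hunitary : star u * u = 1 := ext fun x => by simp [RCLike.conj_mul, hu x]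
  calc k = star u * u * k := by rw [hunitary, one_mul]
    _ = star u := by rw [mul_assoc, huk, mul_one]

variable [CompactSpace Y]

lemma comp_mem_closure_adjoin (ρ : C(Y, ℝ)) (φ : C(ℝ, ℝ)) :
    φ.comp ρ ∈ closure (Algebra.adjoin ℝ {ρ} : Set C(Y, ℝ)) := by
  refine Metric.mem_closure_iff.2 fun ε hε => ?_
  obtain ⟨p, hp⟩ := exists_polynomial_near_of_continuousOn (-‖ρ‖) ‖ρ‖ φ
    φ.continuous.continuousOn ε hε
  refine ⟨Polynomial.aeval ρ p, Polynomial.aeval_mem_adjoin_singleton ℝ ρ,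
    (dist_lt_iff hε).2 fun x => ?_⟩
  rw [Polynomial.aeval_continuousMap_apply, Real.dist_eq, abs_sub_comm]
  exact hp (ρ x) (abs_le.1 (ρ.norm_coe_le_norm x))

lemma ofRealAm_comp_mem {B : Subalgebra ℂ C(Y, ℂ)} (hB : IsClosed (B : Set C(Y, ℂ)))
    {ρ : C(Y, ℝ)} (hρ : ofRealAm ρ ∈ B) (φ : C(ℝ, ℝ)) : ofRealAm (φ.comp ρ) ∈ B := by
  have hadj : Algebra.adjoin ℝ {ρ} ≤ (B.restrictScalars ℝ).comap ofRealAm :=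
    Algebra.adjoin_le (Set.singleton_subset_iff.2 hρ)
  rw [← SetLike.mem_coe, ← hB.closure_eq]
  exact map_mem_closure continuous_ofRealAm (comp_mem_closure_adjoin ρ φ) fun g hg => hadj hg

lemma dist_mul_le_of_eq_zero {F : Set Y} [CompactSpace F] {e : C(Y, ℂ)}
    (he : ∀ x ∉ F, e x = 0) (g h : C(Y, ℂ)) :
    dist (e * g) (e * h) ≤ ‖e‖ * dist (g.restrict F) (h.restrict F) := by
  refine (dist_le (by positivity)).2 fun x => ?_
  by_cases hx : x ∈ F
  · rw [mul_apply, mul_apply, dist_eq_norm, ← mul_sub, norm_mul, ← dist_eq_norm]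
    exact mul_le_mul (e.norm_coe_le_norm x)
      (dist_apply_le_dist (f := g.restrict F) (g := h.restrict F) ⟨x, hx⟩) dist_nonneg
      (norm_nonneg e)
  · simp only [mul_apply, he x hx, zero_mul, dist_self]
    positivity

end ContinuousMap

open ContinuousMap

namespace Pervasive

variable {Y : Type} [TopologicalSpace Y] {A B : Subalgebra ℂ C(Y, ℂ)}

lemma mono (hA : Pervasive A) (hAB : A ≤ B) : Pervasive B :=
  fun F hF hFne hFu => (hA F hF hFne hFu).mono (Set.image_mono hAB)

variable [CompactSpace Y]

lemma mul_mem (hB : Pervasive B) (hBc : IsClosed (B : Set C(Y, ℂ))) {e : C(Y, ℂ)} (he : e ∈ B)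
    {F : Set Y} (hF : IsClosed F) (hFu : F ≠ Set.univ) (he₀ : ∀ x ∉ F, e x = 0)
    (h : C(Y, ℂ)) : e * h ∈ B := by
  rcases F.eq_empty_or_nonempty with rfl | hFne
  · have : e = 0 := ext fun x => he₀ x (Set.notMem_empty x)
    simp [this]
  have : CompactSpace F := isCompact_iff_compactSpace.mp hF.isCompact
  rw [← SetLike.mem_coe, ← hBc.closure_eq, Metric.mem_closure_iff]
  intro ε hε
  obtain ⟨-, ⟨a, haB, rfl⟩, ha⟩ :=
    Metric.mem_closure_iff.1 (hB F hF hFne hFu (h.restrict F)) (ε / (‖e‖ + 1)) (by positivity)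
  refine ⟨e * a, B.mul_mem he haB, (dist_mul_le_of_eq_zero he₀ h a).trans_lt ?_⟩
  calc ‖e‖ * dist (h.restrict F) (a.restrict F)
      ≤ (‖e‖ + 1) * dist (h.restrict F) (a.restrict F) := by gcongr; linarith
    _ < ε := (lt_div_iff₀' (by positivity)).1 ha

lemma eq_top_of_eq_zero_of_eq_one (hB : Pervasive B) (hBc : IsClosed (B : Set C(Y, ℂ)))
    {e : C(Y, ℂ)} (he : e ∈ B) {F₁ F₂ : Set Y}
    (hF₁ : IsClosed F₁) (hF₁u : F₁ ≠ Set.univ) (hF₂ : IsClosed F₂) (hF₂u : F₂ ≠ Set.univ)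
    (he₁ : ∀ x ∉ F₁, e x = 0) (he₂ : ∀ x ∉ F₂, e x = 1) : B = ⊤ := by
  refine Algebra.eq_top_iff.2 fun h => ?_
  have h₁ := hB.mul_mem hBc he hF₁ hF₁u he₁ h
  have h₂ := hB.mul_mem hBc (B.sub_mem B.one_mem he) hF₂ hF₂u
    (fun x hx => by simp [he₂ x hx]) h
  simpa [← add_mul] using B.add_mem h₁ h₂

lemma eq_top_of_ofRealAm_mem (hB : Pervasive B) (hBc : IsClosed (B : Set C(Y, ℂ)))
    {ρ : C(Y, ℝ)} (hρ : ofRealAm ρ ∈ B) {z w : Y} (hzw : ρ z < ρ w) : B = ⊤ := by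
  obtain ⟨c₁, hzc₁, hc₁w⟩ := exists_between hzw
  obtain ⟨c₂, hc₁₂, hc₂w⟩ := exists_between hc₁w
  obtain ⟨φ, hφ₀, hφ₁, -⟩ := exists_continuous_zero_one_of_isClosed isClosed_Ici isClosed_Iic
    (Set.Ici_disjoint_Iic.2 hc₁₂.not_ge)
  refine hB.eq_top_of_eq_zero_of_eq_one hBc (ofRealAm_comp_mem hBc hρ φ)
    (F₁ := ρ ⁻¹' Set.Iic c₂) (F₂ := ρ ⁻¹' Set.Ici c₁)
    (isClosed_Iic.preimage ρ.continuous) (Set.ne_univ_iff_exists_notMem _ |>.2 ⟨w, ?_⟩)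
    (isClosed_Ici.preimage ρ.continuous) (Set.ne_univ_iff_exists_notMem _ |>.2 ⟨z, ?_⟩)
    (fun x hx => ?_) (fun x hx => ?_)
  · simpa using hc₂w
  · simpa using hzc₁
  · simp only [Set.mem_preimage, Set.mem_Iic, not_le] at hx
    simp [hφ₀ hx.le]
  · simp only [Set.mem_preimage, Set.mem_Ici, not_le] at hx
    simp [hφ₁ hx.le]

lemma eq_top_of_star_mem (hB : Pervasive B) (hBc : IsClosed (B : Set C(Y, ℂ))) {u : C(Y, ℂ)}
    (hu : u ∈ B) (hu' : star u ∈ B) {z w : Y} (hzw : u z ≠ u w) : B = ⊤ := by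
  have hre := ofRealAm_re_mem hu hu'
  have him := ofRealAm_im_mem hu hu'
  rcases not_and_or.1 (hzw ∘ Complex.ext_iff.2) with hne | hne <;>
    rcases Ne.lt_or_gt hne with hlt | hlt
  exacts [hB.eq_top_of_ofRealAm_mem hBc hre hlt, hB.eq_top_of_ofRealAm_mem hBc hre hlt,
    hB.eq_top_of_ofRealAm_mem hBc him hlt, hB.eq_top_of_ofRealAm_mem hBc him hlt]

end Pervasive

namespace StronglyLogmodular

variable {Y : Type} [TopologicalSpace Y] {A B : Subalgebra ℂ C(Y, ℂ)}

lemma exists_norm_mul_eq_one (hA : StronglyLogmodular A) {v : C(Y, ℂ)} (hv : ∀ x, v x ≠ 0) :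
    ∃ g ∈ A, (∃ h ∈ A, g * h = 1) ∧ ∀ x, ‖(g * v) x‖ = 1 := by
  obtain ⟨g, hgA, ⟨h, hhA, hgh⟩, hlog⟩ :=
    hA ⟨fun x => -Real.log ‖v x‖, (continuous_norm.comp v.continuous).log
      (fun x => norm_ne_zero_iff.2 (hv x)) |>.neg⟩
  refine ⟨g, hgA, ⟨h, hhA, hgh⟩, fun x => ?_⟩
  have hgx : g x ≠ 0 := left_ne_zero_of_mul_eq_one (congrArg (· x) hgh)
  rw [mul_apply, norm_mul]
  refine Real.eq_one_of_pos_of_log_eq_zero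
    (mul_pos (norm_pos_iff.2 hgx) (norm_pos_iff.2 (hv x))) ?_
  rw [Real.log_mul (norm_ne_zero_iff.2 hgx) (norm_ne_zero_iff.2 (hv x)), hlog x]
  simp

lemma mem_of_mul_eq_one [CompactSpace Y] (hA : StronglyLogmodular A) (hB : Pervasive B)
    (hBc : IsClosed (B : Set C(Y, ℂ))) (hAB : A ≤ B) (hBtop : B ≠ ⊤) {v k : C(Y, ℂ)}
    (hv : v ∈ B) (hk : k ∈ B) (hvk : v * k = 1) : v ∈ A := by
  obtain ⟨g, hgA, ⟨h, hhA, hgh⟩, hgv⟩ :=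
    hA.exists_norm_mul_eq_one fun x => left_ne_zero_of_mul_eq_one (congrArg (· x) hvk)
  have hstar : star (g * v) = h * k := by
    refine (eq_star_of_mul_eq_one hgv ?_).symm
    rw [mul_mul_mul_comm, hgh, hvk, one_mul]
  have hvh : v = h * (g * v) := by rw [← mul_assoc, mul_comm h, hgh, one_mul]
  by_cases hconst : ∀ x y, (g * v) x = (g * v) y
  · rcases isEmpty_or_nonempty Y with hY | ⟨⟨x₀⟩⟩
    · exact Subsingleton.elim (1 : C(Y, ℂ)) v ▸ A.one_mem
    rw [hvh, show g * v = algebraMap ℂ _ ((g * v) x₀) from ext fun x => hconst x x₀]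
    exact A.mul_mem hhA (A.algebraMap_mem _)
  · push Not at hconst
    obtain ⟨z, w, hzw⟩ := hconst
    exact absurd (hB.eq_top_of_star_mem hBc (B.mul_mem (hAB hgA) hv)
      (hstar ▸ B.mul_mem (hAB hhA) hk) hzw) hBtop

end StronglyLogmodular

theorem stmt_13 (A : Subalgebra ℂ C(X, ℂ))
    (hslm : StronglyLogmodular A)
    (hperv : Pervasive A) :
    ∀ B : Subalgebra ℂ C(X, ℂ), IsClosed (B : Set C(X, ℂ)) → A ≤ B →
      B = A ∨ B = ⊤ := by
  intro B hB hAB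
  refine or_iff_not_imp_right.2 fun hBtop => le_antisymm (fun f hf => ?_) hAB
  set c : ℂ := ((‖f‖ + 1 : ℝ) : ℂ)
  have hc : c ≠ 0 := Complex.ofReal_ne_zero.2 (by positivity)
  have hcf : c⁻¹ • f ∈ B := B.smul_mem hf _
  obtain ⟨k, hkB, hk⟩ := exists_one_sub_mul_eq_one hB hcf (by
    rw [norm_smul, norm_inv, Complex.norm_real, Real.norm_of_nonneg (by positivity),
      inv_mul_lt_iff₀ (by positivity)]
    linarith)
  have hv : 1 - c⁻¹ • f ∈ A :=
    hslm.mem_of_mul_eq_one (hperv.mono hAB) hB hAB hBtop (B.sub_mem B.one_mem hcf) hkB hk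
  have hf_eq : f = c • (1 - (1 - c⁻¹ • f)) := by rw [sub_sub_cancel, smul_inv_smul₀ hc]
  rw [hf_eq]
  exact A.smul_mem (A.sub_mem A.one_mem hv) c
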